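/- arXiv:1504.00835 — 7 statements merged into one kernel-verified Lean document; each statement's English description precedes it below -/
import Mathlib

section
/- Let (X, Σ) be a measurable space and let μ^{11}, μ^{12}, μ^{21}, μ^{22} be complex measures on (X, Σ) such that for every ζ = (ζ_1, ζ_2) ∈ ℂ² and every A ∈ Σ the number Σ_{i,j=1}^2 ζ_i · conj(ζ_j) · μ^{ij}(A) is a nonnegative real number. Then for every A ∈ Σ, every finite family A_1, …, A_m ∈ Σ of pairwise disjoint sets with A_k ⊆ A for all k, and every real c > 0, one has Σ_{k=1}^m |μ^{12}(A_k)| ≤ (c/2) μ^{11}(A) + (1/(2c)) μ^{22}(A); consequently Σ_{k=1}^m |μ^{12}(A_k)| ≤ (μ^{11}(A) · μ^{22}(A))^{1/2}. (In particular, the total variation of μ^{12} on A is at most (μ^{11}(A) μ^{22}(A))^{1/2}.) -/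
/-! Nonnegative definiteness gives the determinant bound `|μ¹²(B)|² ≤ μ¹¹(B) μ²²(B)` for every
measurable `B`.
Summing `|μ¹²(A_k)| ≤ √μ¹¹(A_k) √μ²²(A_k)` over the `A_k` and applying Cauchy–Schwarz bounds
`∑ |μ¹²(A_k)|` by `√(∑ μ¹¹(A_k)) √(∑ μ²²(A_k)) ≤ √(μ¹¹(A) μ²²(A))`, by monotonicity of the
nonnegative measures `μ¹¹, μ²²`; the weighted bound then follows from AM–GM,
`√(xy) ≤ (c/2) x + y/(2c)`. -/

open MeasureTheory ComplexConjugate Function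

theorem MeasureTheory.VectorMeasure.sum_le_of_disjoint_subset {X M ι : Type*}
    [MeasurableSpace X] [AddCommMonoid M] [TopologicalSpace M] [T2Space M] [PartialOrder M]
    [IsOrderedAddMonoid M] [Fintype ι] {v : VectorMeasure X M} (hv : 0 ≤ v) {A : Set X}
    (hA : MeasurableSet A) {As : ι → Set X} (hAs : ∀ k, MeasurableSet (As k))
    (hd : Pairwise (Disjoint on As)) (hsub : ∀ k, As k ⊆ A) :
    ∑ k, v (As k) ≤ v A := by
  have hU : MeasurableSet (⋃ k, As k) := .iUnion hAs
  calc ∑ k, v (As k) = v (⋃ k, As k) := by rw [of_disjoint_iUnion hAs hd, tsum_fintype]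
    _ ≤ v (⋃ k, As k) + v (A \ ⋃ k, As k) := le_add_of_nonneg_right (hv _ (hA.diff hU))
    _ = v A := by
      rw [← of_union Set.disjoint_sdiff_right hU (hA.diff hU), Set.union_sdiff_cancel
        (Set.iUnion_subset hsub)]

theorem MeasureTheory.ComplexMeasure.sum_re_le_of_disjoint_subset {X ι : Type*}
    [MeasurableSpace X] [Fintype ι] {μ : ComplexMeasure X}
    (hμ : ∀ B, MeasurableSet B → 0 ≤ (μ B).re) {A : Set X} (hA : MeasurableSet A)
    {As : ι → Set X} (hAs : ∀ k, MeasurableSet (As k)) (hd : Pairwise (Disjoint on As))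
    (hsub : ∀ k, As k ⊆ A) :
    ∑ k, (μ (As k)).re ≤ (μ A).re :=
  VectorMeasure.sum_le_of_disjoint_subset (v := re μ) hμ hA hAs hd hsub

theorem Real.sqrt_mul_le_half_mul_add_half_div {a d c : ℝ} (ha : 0 ≤ a) (hd : 0 ≤ d)
    (hc : 0 < c) : √(a * d) ≤ c / 2 * a + 1 / (2 * c) * d := by
  have hcd : c / 2 * a * (1 / (2 * c) * d) * 4 = a * d := by field_simp; ring
  refine Real.sqrt_le_iff.mpr ⟨by positivity, ?_⟩
  nlinarith [sq_nonneg (c / 2 * a - 1 / (2 * c) * d)]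

def IsNonnegDefinite₂ (a b b' d : ℂ) : Prop :=
  ∀ ζ1 ζ2 : ℂ, ∃ r : ℝ, 0 ≤ r ∧
    ζ1 * conj ζ1 * a + ζ1 * conj ζ2 * b + ζ2 * conj ζ1 * b' + ζ2 * conj ζ2 * d = r

namespace IsNonnegDefinite₂

variable {a b b' d : ℂ}

theorem swap (h : IsNonnegDefinite₂ a b b' d) : IsNonnegDefinite₂ d b' b a := fun ζ1 ζ2 ↦ by
  obtain ⟨r, hr, e⟩ := h ζ2 ζ1
  exact ⟨r, hr, by linear_combination e⟩

theorem re_left_nonneg (h : IsNonnegDefinite₂ a b b' d) : 0 ≤ a.re := by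
  obtain ⟨r, hr, e⟩ := h 1 0
  simp_all

theorem im_left (h : IsNonnegDefinite₂ a b b' d) : a.im = 0 := by
  obtain ⟨r, -, e⟩ := h 1 0
  simp_all

theorem re_right_nonneg (h : IsNonnegDefinite₂ a b b' d) : 0 ≤ d.re := h.swap.re_left_nonneg

theorem im_right (h : IsNonnegDefinite₂ a b b' d) : d.im = 0 := h.swap.im_left

theorem conj_eq (h : IsNonnegDefinite₂ a b b' d) : conj b = b' := by
  obtain ⟨r₁, -, e₁⟩ := h 1 1
  obtain ⟨r₂, -, e₂⟩ := h 1 Complex.I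
  have i₁ := congrArg Complex.im e₁
  have i₂ := congrArg Complex.im e₂
  simp only [map_one, mul_one, one_mul, Complex.add_im, h.im_left, zero_add, h.im_right,
    add_zero, Complex.ofReal_im, Complex.conj_I, mul_neg, neg_mul, Complex.I_mul_I, neg_neg,
    Complex.neg_im, Complex.mul_im, Complex.I_re, zero_mul, Complex.I_im] at i₁ i₂
  apply Complex.ext <;> simp only [Complex.conj_re, Complex.conj_im] <;> linarith

theorem norm_sq_le (h : IsNonnegDefinite₂ a b b' d) : ‖b‖ ^ 2 ≤ a.re * d.re := by
  -- `ζ = (t, -b)` turns the form into a real quadratic in `t`, whose discriminant must be `≤ 0`.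
  have hquad : ∀ t : ℝ, 0 ≤ a.re * (t * t) + (-2 * ‖b‖ ^ 2) * t + ‖b‖ ^ 2 * d.re := fun t ↦ by
    obtain ⟨r, hr, e⟩ := h t (-b)
    have ha : (a.re : ℂ) = a := Complex.ext rfl (by simp [h.im_left])
    have hd : (d.re : ℂ) = d := Complex.ext rfl (by simp [h.im_right])
    rw [← h.conj_eq, ← ha, ← hd] at e
    have hb : b * conj b = (‖b‖ : ℂ) ^ 2 := Complex.mul_conj' b
    have : ((a.re * (t * t) + (-2 * ‖b‖ ^ 2) * t + ‖b‖ ^ 2 * d.re : ℝ) : ℂ) = r := by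
      rw [← e]
      simp only [map_neg, Complex.conj_ofReal]
      push_cast
      linear_combination (2 * (t : ℂ) - d.re) * hb
    rw [Complex.ofReal_injective this]
    exact hr
  have := discrim_le_zero hquad
  unfold discrim at this
  nlinarith [mul_nonneg h.re_left_nonneg h.re_right_nonneg]

theorem norm_le_sqrt_mul_sqrt (h : IsNonnegDefinite₂ a b b' d) : ‖b‖ ≤ √a.re * √d.re := by
  rw [← Real.sqrt_mul h.re_left_nonneg]
  exact Real.le_sqrt_of_sq_le h.norm_sq_le

end IsNonnegDefinite₂

/-- For a nonnegative definite 2×2 family of complex measures `μ^{ij}` on a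
measurable space, for every measurable `A`, every finite disjoint family of measurable
subsets `A_1,…,A_m` of `A`, and every `c > 0`,
`∑_k |μ^{12}(A_k)| ≤ (c/2) μ^{11}(A) + (1/(2c)) μ^{22}(A)`, and consequently
`∑_k |μ^{12}(A_k)| ≤ (μ^{11}(A) μ^{22}(A))^{1/2}`. -/
theorem variation_bound_of_nonneg_definite_pair
    {X : Type*} [MeasurableSpace X]
    (μ11 μ12 μ21 μ22 : MeasureTheory.ComplexMeasure X)
    (hpos : ∀ (ζ1 ζ2 : ℂ) (A : Set X), MeasurableSet A →
      ∃ r : ℝ, 0 ≤ r ∧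
        ζ1 * (starRingEnd ℂ) ζ1 * μ11 A + ζ1 * (starRingEnd ℂ) ζ2 * μ12 A +
          ζ2 * (starRingEnd ℂ) ζ1 * μ21 A + ζ2 * (starRingEnd ℂ) ζ2 * μ22 A = (r : ℂ)) :
    ∀ (A : Set X), MeasurableSet A →
      ∀ (m : ℕ) (As : Fin m → Set X), (∀ k, MeasurableSet (As k)) →
        (Pairwise (Function.onFun Disjoint As)) → (∀ k, As k ⊆ A) →
        (∀ c : ℝ, 0 < c →
          ∑ k, ‖μ12 (As k)‖ ≤ c / 2 * (μ11 A).re + 1 / (2 * c) * (μ22 A).re) ∧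
        ∑ k, ‖μ12 (As k)‖ ≤ Real.sqrt ((μ11 A).re * (μ22 A).re) := by
  have hform (B : Set X) (hB : MeasurableSet B) :
      IsNonnegDefinite₂ (μ11 B) (μ12 B) (μ21 B) (μ22 B) := fun ζ1 ζ2 ↦ hpos ζ1 ζ2 B hB
  intro A hA m As hAs hd hsub
  have hsqrt : ∑ k, ‖μ12 (As k)‖ ≤ √((μ11 A).re * (μ22 A).re) := calc
    ∑ k, ‖μ12 (As k)‖ ≤ ∑ k, √(μ11 (As k)).re * √(μ22 (As k)).re :=
      Finset.sum_le_sum fun k _ ↦ (hform _ (hAs k)).norm_le_sqrt_mul_sqrt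
    _ ≤ √(∑ k, (μ11 (As k)).re) * √(∑ k, (μ22 (As k)).re) :=
      Real.sum_sqrt_mul_sqrt_le _ (fun k ↦ (hform _ (hAs k)).re_left_nonneg)
        (fun k ↦ (hform _ (hAs k)).re_right_nonneg)
    _ ≤ √(μ11 A).re * √(μ22 A).re := by
      gcongr <;> refine ComplexMeasure.sum_re_le_of_disjoint_subset ?_ hA hAs hd hsub
      exacts [fun B hB ↦ (hform B hB).re_left_nonneg, fun B hB ↦ (hform B hB).re_right_nonneg]
    _ = √((μ11 A).re * (μ22 A).re) := (Real.sqrt_mul (hform A hA).re_left_nonneg _).symm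
  refine ⟨fun c hc ↦ hsqrt.trans ?_, hsqrt⟩
  exact Real.sqrt_mul_le_half_mul_add_half_div (hform A hA).re_left_nonneg
    (hform A hA).re_right_nonneg hc
end

section
/- Let E be a complete normed vector space over ℝ, let D ⊆ ℝ be a dense subset, let ν be a finite Borel measure on ℝ, and let μ : D × D → E be a map such that for all p, p', q ∈ D with p < p' one has ‖μ(p', q) − μ(p, q)‖ ≤ 2 (ν((p, p')))^{1/2} and ‖μ(q, p') − μ(q, p)‖ ≤ 2 (ν((p, p')))^{1/2}, where (p, p') denotes the open interval. Then for every (p₀, q₀) ∈ ℝ² there exist elements m₊, m₋ ∈ E such that μ(p', q') converges to m₊ as (p', q') → (p₀, q₀) with p', q' ∈ D, p' > p₀, q' > q₀, and μ(p', q') converges to m₋ as (p', q') → (p₀, q₀) with p', q' ∈ D, p' < p₀, q' < q₀. -/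
/-!
By the two estimates, `μ` oscillates by at most `2 ν(I)^{1/2}` in either variable while that
variable ranges over `D ∩ I`, for any interval `I`. Hence on the window
`(p₀, p₀ + η) × (q₀, q₀ + η)` its oscillation is at most
`2 ν((p₀, p₀ + η))^{1/2} + 2 ν((q₀, q₀ + η))^{1/2}`, which tends to `0` as `η ↓ 0` because these
intervals decrease to `∅` and `ν` is finite. This Cauchy condition gives the limit `m₊` by
completeness of `E`; the left windows give `m₋` in the same way.
-/

open MeasureTheory Filter Topology Set Metric

theorem exists_forall_dist_lt_of_forall_dist_lt {X E : Type*} [PseudoMetricSpace E]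
    [CompleteSpace E] [Nonempty E] {f : X → E} {S : ℝ → Set X} (hS : Monotone S)
    (hf : ∀ ε > 0, ∃ η > 0, ∀ x ∈ S η, ∀ y ∈ S η, dist (f x) (f y) < ε) :
    ∃ m, ∀ ε > 0, ∃ η > 0, ∀ x ∈ S η, dist (f x) m < ε := by
  have hl : (⨅ (η) (_ : 0 < η), 𝓟 (S η)).HasBasis (0 < ·) S :=
    hasBasis_biInf_principal' (fun i hi j hj => ⟨min i j, lt_min hi hj,
      hS (min_le_left i j), hS (min_le_right i j)⟩) ⟨1, one_pos⟩
  obtain ⟨m, hm⟩ : ∃ m, Tendsto f (⨅ (η) (_ : 0 < η), 𝓟 (S η)) (𝓝 m) := by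
    rcases eq_or_neBot (⨅ (η) (_ : 0 < η), 𝓟 (S η)) with hbot | hne
    · exact ⟨Classical.arbitrary E, hbot ▸ tendsto_bot⟩
    refine cauchy_map_iff_exists_tendsto.1 (Metric.cauchy_iff.2 ⟨hne.map f, fun ε hε => ?_⟩)
    obtain ⟨η, hη, hSη⟩ := hf ε hε
    refine ⟨f '' S η, image_mem_map (hl.mem_of_mem hη), ?_⟩
    rintro _ ⟨x, hx, rfl⟩ _ ⟨y, hy, rfl⟩
    exact hSη x hx y hy
  exact ⟨m, fun ε hε => hl.tendsto_left_iff.1 hm (ball m ε) (ball_mem_nhds m hε)⟩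

section

variable {ν : Measure ℝ} [IsFiniteMeasure ν]

theorem tendsto_measure_Ioo_add (a : ℝ) :
    Tendsto (fun η => ν (Ioo a (a + η))) (𝓝[>] 0) (𝓝 0) := by
  have hempty : ⋂ η > (0 : ℝ), Ioo a (a + η) = ∅ :=
    eq_empty_of_forall_notMem fun x hx => by
      have hxa : a < x := (mem_iInter₂.1 hx 1 one_pos).1
      have := (mem_iInter₂.1 hx (x - a) (sub_pos.2 hxa)).2
      linarith
  have h := tendsto_measure_biInter_gt (μ := ν) (s := fun η => Ioo a (a + η)) (a := 0)
    (fun _ _ => measurableSet_Ioo.nullMeasurableSet)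
    (fun _ _ _ hij => Ioo_subset_Ioo le_rfl (by linarith)) ⟨1, one_pos, measure_ne_top ν _⟩
  rwa [hempty, measure_empty] at h

theorem tendsto_measure_Ioo_sub (a : ℝ) :
    Tendsto (fun η => ν (Ioo (a - η) a)) (𝓝[>] 0) (𝓝 0) := by
  have hempty : ⋂ η > (0 : ℝ), Ioo (a - η) a = ∅ :=
    eq_empty_of_forall_notMem fun x hx => by
      have hxa : x < a := (mem_iInter₂.1 hx 1 one_pos).2
      have := (mem_iInter₂.1 hx (a - x) (sub_pos.2 hxa)).1
      linarith
  have h := tendsto_measure_biInter_gt (μ := ν) (s := fun η => Ioo (a - η) a) (a := 0)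
    (fun _ _ => measurableSet_Ioo.nullMeasurableSet)
    (fun _ _ _ hij => Ioo_subset_Ioo (by linarith) le_rfl) ⟨1, one_pos, measure_ne_top ν _⟩
  rwa [hempty, measure_empty] at h

variable {E : Type*} [SeminormedAddCommGroup E] {D : Set ℝ}

theorem dist_le_of_norm_sub_le_sqrt_measure {g : ℝ → E}
    (hg : ∀ p p', p ∈ D → p' ∈ D → p < p' → ‖g p' - g p‖ ≤ 2 * √(ν (Ioo p p')).toReal)
    {t : Set ℝ} (ht : t.OrdConnected) {p p' : ℝ} (hp : p ∈ D ∩ t) (hp' : p' ∈ D ∩ t) :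
    dist (g p) (g p') ≤ 2 * √(ν t).toReal := by
  wlog hle : p ≤ p' generalizing p p'
  · rw [dist_comm]
    exact this hp' hp (le_of_not_ge hle)
  rcases hle.eq_or_lt with rfl | hlt
  · simp only [dist_self]
    positivity
  rw [dist_comm, dist_eq_norm]
  refine (hg p p' hp.1 hp'.1 hlt).trans ?_
  gcongr
  · exact measure_ne_top ν t
  · exact Ioo_subset_Icc_self.trans (ht.out hp.2 hp'.2)

theorem exists_limit_of_norm_sub_le_sqrt_measure {μ : ℝ → ℝ → E} [CompleteSpace E]
    (h1 : ∀ p p' q : ℝ, p ∈ D → p' ∈ D → q ∈ D → p < p' →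
      ‖μ p' q - μ p q‖ ≤ 2 * √(ν (Ioo p p')).toReal)
    (h2 : ∀ p p' q : ℝ, p ∈ D → p' ∈ D → q ∈ D → p < p' →
      ‖μ q p' - μ q p‖ ≤ 2 * √(ν (Ioo p p')).toReal)
    {I J : ℝ → Set ℝ} (hI : Monotone I) (hJ : Monotone J)
    (hIc : ∀ η, (I η).OrdConnected) (hJc : ∀ η, (J η).OrdConnected)
    (hI0 : Tendsto (fun η => ν (I η)) (𝓝[>] 0) (𝓝 0))
    (hJ0 : Tendsto (fun η => ν (J η)) (𝓝[>] 0) (𝓝 0)) :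
    ∃ m, ∀ ε > 0, ∃ η > 0, ∀ p ∈ D ∩ I η, ∀ q ∈ D ∩ J η, dist (μ p q) m < ε := by
  set w : ℝ → ℝ := fun η => 2 * √(ν (I η)).toReal + 2 * √(ν (J η)).toReal
  have hw : Tendsto w (𝓝[>] 0) (𝓝 0) := by
    have hsqrt {s : ℝ → Set ℝ} (hs : Tendsto (fun η => ν (s η)) (𝓝[>] 0) (𝓝 0)) :
        Tendsto (fun η => 2 * √(ν (s η)).toReal) (𝓝[>] 0) (𝓝 0) := by
      simpa using ((ENNReal.tendsto_toReal ENNReal.zero_ne_top).comp hs).sqrt.const_mul 2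
    simpa using (hsqrt hI0).add (hsqrt hJ0)
  have hosc : ∀ η, ∀ x ∈ (D ∩ I η) ×ˢ (D ∩ J η), ∀ y ∈ (D ∩ I η) ×ˢ (D ∩ J η),
      dist (μ x.1 x.2) (μ y.1 y.2) ≤ w η := fun η x ⟨hx1, hx2⟩ y ⟨hy1, hy2⟩ =>
    calc dist (μ x.1 x.2) (μ y.1 y.2)
        ≤ dist (μ x.1 x.2) (μ y.1 x.2) + dist (μ y.1 x.2) (μ y.1 y.2) := dist_triangle _ _ _
      _ ≤ w η := add_le_add
          (dist_le_of_norm_sub_le_sqrt_measure (fun p p' hp hp' => h1 p p' x.2 hp hp' hx2.1)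
            (hIc η) hx1 hy1)
          (dist_le_of_norm_sub_le_sqrt_measure (fun q q' hq hq' => h2 q q' y.1 hq hq' hy1.1)
            (hJc η) hx2 hy2)
  obtain ⟨m, hm⟩ := exists_forall_dist_lt_of_forall_dist_lt (f := fun x : ℝ × ℝ => μ x.1 x.2)
    (fun _ _ h => prod_mono (inter_subset_inter_right D (hI h)) (inter_subset_inter_right D (hJ h)))
    (fun ε hε => by
      obtain ⟨η, hwη, hη⟩ := ((hw.eventually (gt_mem_nhds hε)).and self_mem_nhdsWithin).exists
      exact ⟨η, hη, fun x hx y hy => (hosc η x hx y hy).trans_lt hwη⟩)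
  exact ⟨m, fun ε hε => (hm ε hε).imp fun η ⟨hη, h⟩ => ⟨hη, fun p hp q hq => h (p, q) ⟨hp, hq⟩⟩⟩

end

theorem one_sided_limits_exist_general
    {E : Type*} [NormedAddCommGroup E] [CompleteSpace E]
    (D : Set ℝ) (ν : Measure ℝ) [IsFiniteMeasure ν]
    (μ : ℝ → ℝ → E)
    (h1 : ∀ p p' q : ℝ, p ∈ D → p' ∈ D → q ∈ D → p < p' →
      ‖μ p' q - μ p q‖ ≤ 2 * Real.sqrt (ν (Set.Ioo p p')).toReal)
    (h2 : ∀ p p' q : ℝ, p ∈ D → p' ∈ D → q ∈ D → p < p' →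
      ‖μ q p' - μ q p‖ ≤ 2 * Real.sqrt (ν (Set.Ioo p p')).toReal) :
    ∀ p₀ q₀ : ℝ, ∃ mp mm : E,
      (∀ ε : ℝ, 0 < ε → ∃ η : ℝ, 0 < η ∧ ∀ p' q' : ℝ, p' ∈ D → q' ∈ D →
        p₀ < p' → p' < p₀ + η → q₀ < q' → q' < q₀ + η → ‖μ p' q' - mp‖ < ε) ∧
      (∀ ε : ℝ, 0 < ε → ∃ η : ℝ, 0 < η ∧ ∀ p' q' : ℝ, p' ∈ D → q' ∈ D →
        p₀ - η < p' → p' < p₀ → q₀ - η < q' → q' < q₀ → ‖μ p' q' - mm‖ < ε) := by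
  intro p₀ q₀
  have hright (a : ℝ) : Monotone fun η => Ioo a (a + η) :=
    fun _ _ h => Ioo_subset_Ioo le_rfl (by linarith)
  have hleft (a : ℝ) : Monotone fun η => Ioo (a - η) a :=
    fun _ _ h => Ioo_subset_Ioo (by linarith) le_rfl
  obtain ⟨mp, hmp⟩ := exists_limit_of_norm_sub_le_sqrt_measure h1 h2 (hright p₀) (hright q₀)
    (fun _ => ordConnected_Ioo) (fun _ => ordConnected_Ioo)
    (tendsto_measure_Ioo_add p₀) (tendsto_measure_Ioo_add q₀)
  obtain ⟨mm, hmm⟩ := exists_limit_of_norm_sub_le_sqrt_measure h1 h2 (hleft p₀) (hleft q₀)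
    (fun _ => ordConnected_Ioo) (fun _ => ordConnected_Ioo)
    (tendsto_measure_Ioo_sub p₀) (tendsto_measure_Ioo_sub q₀)
  refine ⟨mp, mm, fun ε hε => ?_, fun ε hε => ?_⟩
  · obtain ⟨η, hη, h⟩ := hmp ε hε
    exact ⟨η, hη, fun p' q' hp hq h₁ h₂ h₃ h₄ => by
      simpa [dist_eq_norm] using h p' ⟨hp, h₁, h₂⟩ q' ⟨hq, h₃, h₄⟩⟩
  · obtain ⟨η, hη, h⟩ := hmm ε hε
    exact ⟨η, hη, fun p' q' hp hq h₁ h₂ h₃ h₄ => by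
      simpa [dist_eq_norm] using h p' ⟨hp, h₁, h₂⟩ q' ⟨hq, h₃, h₄⟩⟩

/-- Let `E` be a complete normed real vector space, `D ⊆ ℝ` dense, `ν` a finite
Borel measure on `ℝ`, and `μ : D × D → E` satisfy the Hölder-type estimates
`‖μ(p',q) − μ(p,q)‖ ≤ 2 ν((p,p'))^{1/2}` and `‖μ(q,p') − μ(q,p)‖ ≤ 2 ν((p,p'))^{1/2}`
for `p < p'` in `D`. Then at every `(p₀,q₀)` the one-sided limits `m₊` (from the right) and
`m₋` (from the left) of `μ(p',q')` along `D × D` exist. -/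
theorem one_sided_limits_exist
    {E : Type*} [NormedAddCommGroup E] [NormedSpace ℝ E] [CompleteSpace E]
    (D : Set ℝ) (hD : Dense D) (ν : Measure ℝ) [IsFiniteMeasure ν]
    (μ : ℝ → ℝ → E)
    (h1 : ∀ p p' q : ℝ, p ∈ D → p' ∈ D → q ∈ D → p < p' →
      ‖μ p' q - μ p q‖ ≤ 2 * Real.sqrt (ν (Set.Ioo p p')).toReal)
    (h2 : ∀ p p' q : ℝ, p ∈ D → p' ∈ D → q ∈ D → p < p' →
      ‖μ q p' - μ q p‖ ≤ 2 * Real.sqrt (ν (Set.Ioo p p')).toReal) :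
    ∀ p₀ q₀ : ℝ, ∃ mp mm : E,
      (∀ ε : ℝ, 0 < ε → ∃ η : ℝ, 0 < η ∧ ∀ p' q' : ℝ, p' ∈ D → q' ∈ D →
        p₀ < p' → p' < p₀ + η → q₀ < q' → q' < q₀ + η → ‖μ p' q' - mp‖ < ε) ∧
      (∀ ε : ℝ, 0 < ε → ∃ η : ℝ, 0 < η ∧ ∀ p' q' : ℝ, p' ∈ D → q' ∈ D →
        p₀ - η < p' → p' < p₀ → q₀ - η < q' → q' < q₀ → ‖μ p' q' - mm‖ < ε) :=
  one_sided_limits_exist_general D ν μ h1 h2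
end

section
/- Let n ≥ 1, p₀ ∈ ℝ, δ > 0, and let g : [p₀, p₀+δ] → ℝⁿ be a continuous function. Suppose 0 ≤ ε < 1 is such that for every q ∈ [p₀, p₀+δ] one has ‖g(q) − g(p₀)‖ ≤ (ε/2) · max_{λ ∈ [p₀, q]} ‖g(q) − g(λ)‖. Then g is constant on [p₀, p₀+δ], i.e., g(q) = g(p₀) for all q ∈ [p₀, p₀+δ]. -/
/-- If `g : [p₀, p₀+δ] → ℝⁿ` is continuous, `0 ≤ ε < 1`, and for every
`q ∈ [p₀, p₀+δ]` one has `‖g(q) − g(p₀)‖ ≤ (ε/2) max_{λ ∈ [p₀,q]} ‖g(q) − g(λ)‖`, then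
`g` is constant on `[p₀, p₀+δ]`. -/
theorem constant_of_contraction_estimate
    (n : ℕ) (hn : 1 ≤ n) (p₀ δ : ℝ) (hδ : 0 < δ)
    (g : ℝ → EuclideanSpace ℝ (Fin n)) (hg : ContinuousOn g (Set.Icc p₀ (p₀ + δ)))
    (ε : ℝ) (hε0 : 0 ≤ ε) (hε1 : ε < 1)
    (h : ∀ q ∈ Set.Icc p₀ (p₀ + δ),
      ‖g q - g p₀‖ ≤ ε / 2 * sSup ((fun l => ‖g q - g l‖) '' Set.Icc p₀ q)) :
    ∀ q ∈ Set.Icc p₀ (p₀ + δ), g q = g p₀ := by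
  have hne : (Set.Icc p₀ (p₀ + δ)).Nonempty := Set.nonempty_Icc.2 (by linarith)
  have hcf : ContinuousOn (fun q => ‖g q - g p₀‖) (Set.Icc p₀ (p₀ + δ)) := by
    have hp0 : p₀ ∈ Set.Icc p₀ (p₀ + δ) := Set.left_mem_Icc.2 (by linarith)
    exact (hg.sub continuousOn_const).norm
  obtain ⟨q', hq', hmax⟩ := (isCompact_Icc).exists_isMaxOn hne hcf
  set M := ‖g q' - g p₀‖ with hM
  have hM0 : 0 ≤ M := norm_nonneg _
  have hbound : ∀ q ∈ Set.Icc p₀ (p₀ + δ), ‖g q - g p₀‖ ≤ M := fun q hq => hmax hq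
  have hMle : M ≤ ε * M := by
    have h1 := h q' hq'
    have h2 : sSup ((fun l => ‖g q' - g l‖) '' Set.Icc p₀ q') ≤ 2 * M := by
      apply Real.sSup_le
      · rintro x ⟨l, hl, rfl⟩
        have hlmem : l ∈ Set.Icc p₀ (p₀ + δ) :=
          ⟨hl.1, le_trans hl.2 hq'.2⟩
        calc ‖g q' - g l‖ ≤ ‖g q' - g p₀‖ + ‖g l - g p₀‖ := by
              have := norm_sub_le (g q' - g p₀) (g l - g p₀)
              simpa [sub_sub_sub_cancel_right] using this
          _ ≤ M + M := add_le_add (le_refl _) (hbound l hlmem)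
          _ = 2 * M := by ring
      · linarith
    have h3 : ε / 2 * sSup ((fun l => ‖g q' - g l‖) '' Set.Icc p₀ q') ≤ ε / 2 * (2 * M) :=
      mul_le_mul_of_nonneg_left h2 (by linarith)
    calc M ≤ ε / 2 * sSup ((fun l => ‖g q' - g l‖) '' Set.Icc p₀ q') := h1
      _ ≤ ε / 2 * (2 * M) := h3
      _ = ε * M := by ring
  have hMzero : M = 0 := by nlinarith
  intro q hq
  have := hbound q hq
  rw [hMzero] at this
  have : ‖g q - g p₀‖ = 0 := le_antisymm this (norm_nonneg _)
  have := norm_sub_eq_zero_iff.mp this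
  exact this
end

section
/- Let n ≥ 1, p₀ ∈ ℝ, δ₀ > 0, let g : [p₀, p₀+δ₀] → ℝⁿ be continuous, and let ω : (p₀, p₀+δ₀] → [0, ∞) be a nondecreasing function with ω(q) → 0 as q → p₀+. Suppose that for every q ∈ (p₀, p₀+δ₀] one has ‖g(q) − g(p₀)‖ ≤ ω(q) · max_{λ ∈ [p₀, q]} ‖g(q) − g(λ)‖. Then there exists δ ∈ (0, δ₀] such that g is constant on [p₀, p₀+δ]. -/
open Filter

/-- If `g : [p₀, p₀+δ₀] → ℝⁿ` is continuous, `ω : (p₀, p₀+δ₀] → [0,∞)` is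
nondecreasing with `ω(q) → 0` as `q → p₀+`, and for every `q ∈ (p₀, p₀+δ₀]` one has
`‖g(q) − g(p₀)‖ ≤ ω(q) max_{λ ∈ [p₀,q]} ‖g(q) − g(λ)‖`, then `g` is constant on
`[p₀, p₀+δ]` for some `δ ∈ (0, δ₀]`. -/
theorem locally_constant_of_vanishing_modulus
    (n : ℕ) (hn : 1 ≤ n) (p₀ δ₀ : ℝ) (hδ₀ : 0 < δ₀)
    (g : ℝ → EuclideanSpace ℝ (Fin n)) (hg : ContinuousOn g (Set.Icc p₀ (p₀ + δ₀)))
    (ω : ℝ → ℝ)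
    (hω0 : ∀ q ∈ Set.Ioc p₀ (p₀ + δ₀), 0 ≤ ω q)
    (hωmono : ∀ q ∈ Set.Ioc p₀ (p₀ + δ₀), ∀ q' ∈ Set.Ioc p₀ (p₀ + δ₀), q ≤ q' → ω q ≤ ω q')
    (hωlim : Tendsto ω (nhdsWithin p₀ (Set.Ioi p₀)) (nhds 0))
    (h : ∀ q ∈ Set.Ioc p₀ (p₀ + δ₀),
      ‖g q - g p₀‖ ≤ ω q * sSup ((fun l => ‖g q - g l‖) '' Set.Icc p₀ q)) :
    ∃ δ : ℝ, 0 < δ ∧ δ ≤ δ₀ ∧ ∀ q ∈ Set.Icc p₀ (p₀ + δ), g q = g p₀ := by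
  -- find q₁ ∈ (p₀, p₀+δ₀] with ω q₁ < 1/4
  have hmem : Set.Ioc p₀ (p₀ + δ₀) ∈ nhdsWithin p₀ (Set.Ioi p₀) :=
    Ioc_mem_nhdsGT_of_mem (by constructor <;> [exact le_refl _; linarith])
  have hev : ∀ᶠ q in nhdsWithin p₀ (Set.Ioi p₀), ω q < 1/4 :=
    hωlim.eventually (eventually_lt_nhds (by norm_num : (0:ℝ) < 1/4))
  obtain ⟨q₁, hq₁ω, hq₁mem⟩ := (hev.and (eventually_of_mem hmem fun x hx => hx)).exists
  refine ⟨q₁ - p₀, by linarith [hq₁mem.1], by linarith [hq₁mem.2], ?_⟩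
  have hq₁ : p₀ + (q₁ - p₀) = q₁ := by ring
  rw [hq₁]
  -- ω ≤ 1/4 on (p₀, q₁]
  have hωsmall : ∀ q ∈ Set.Ioc p₀ q₁, ω q < 1/4 := fun q hq =>
    lt_of_le_of_lt (hωmono q ⟨hq.1, hq.2.trans hq₁mem.2⟩ q₁ hq₁mem hq.2) hq₁ω
  have hsub : Set.Icc p₀ q₁ ⊆ Set.Icc p₀ (p₀ + δ₀) :=
    Set.Icc_subset_Icc le_rfl hq₁mem.2
  have hgc : ContinuousOn (fun q => ‖g q - g p₀‖) (Set.Icc p₀ q₁) :=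
    ((hg.mono hsub).sub continuousOn_const).norm
  have hcpt : IsCompact (Set.Icc p₀ q₁) := isCompact_Icc
  have hne : (Set.Icc p₀ q₁).Nonempty := ⟨p₀, le_rfl, hq₁mem.1.le⟩
  obtain ⟨q', hq'mem, hq'max⟩ := hcpt.exists_isMaxOn hne hgc
  set S := ‖g q' - g p₀‖ with hS
  have hSnonneg : 0 ≤ S := norm_nonneg _
  have hSmax : ∀ q ∈ Set.Icc p₀ q₁, ‖g q - g p₀‖ ≤ S := fun q hq => hq'max hq
  have hS0 : S ≤ 0 := by
    rcases eq_or_lt_of_le hq'mem.1 with heq | hlt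
    · simp [hS, ← heq]
    · have hq'Ioc : q' ∈ Set.Ioc p₀ (p₀ + δ₀) := ⟨hlt, hq'mem.2.trans hq₁mem.2⟩
      have key := h q' hq'Ioc
      have hbdd : ∀ x ∈ (fun l => ‖g q' - g l‖) '' Set.Icc p₀ q', x ≤ 2 * S := by
        rintro x ⟨l, hl, rfl⟩
        have hl' : l ∈ Set.Icc p₀ q₁ := ⟨hl.1, hl.2.trans hq'mem.2⟩
        calc ‖g q' - g l‖ ≤ ‖g q' - g p₀‖ + ‖g p₀ - g l‖ := norm_sub_le_norm_sub_add_norm_sub _ _ _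
          _ ≤ S + S := by
              have := hSmax l hl'
              rw [norm_sub_rev (g p₀)]
              linarith
          _ = 2 * S := by ring
      have hsup : sSup ((fun l => ‖g q' - g l‖) '' Set.Icc p₀ q') ≤ 2 * S :=
        Real.sSup_le hbdd (by linarith)
      have hsupnn : 0 ≤ sSup ((fun l => ‖g q' - g l‖) '' Set.Icc p₀ q') := by
        apply Real.sSup_nonneg'
        exact ⟨‖g q' - g p₀‖, ⟨p₀, ⟨le_rfl, hlt.le⟩, rfl⟩, norm_nonneg _⟩
      have hω' : ω q' < 1/4 := hωsmall q' ⟨hlt, hq'mem.2⟩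
      have : S ≤ (1/4) * (2 * S) := by
        calc S ≤ ω q' * sSup ((fun l => ‖g q' - g l‖) '' Set.Icc p₀ q') := key
          _ ≤ (1/4) * sSup ((fun l => ‖g q' - g l‖) '' Set.Icc p₀ q') := by
              apply mul_le_mul_of_nonneg_right hω'.le hsupnn
          _ ≤ (1/4) * (2 * S) := by linarith
      linarith
  intro q hq
  have : ‖g q - g p₀‖ ≤ 0 := le_trans (hSmax q hq) hS0
  have := le_antisymm this (norm_nonneg _)
  rwa [norm_eq_zero, sub_eq_zero] at this
end

section
/- Let n ≥ 1, let S = {ξ ∈ ℝⁿ : |ξ| = 1} be the unit sphere, and let μ be a finite nonnegative Borel measure on S. Then the linear span of the set of vectors { ∫_S ξ ψ(ξ) dμ(ξ) : ψ ∈ C(S, ℝ) } coincides with the linear span of the support of μ. -/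
/-!
Both spans are finite-dimensional, so it suffices that they have the same orthogonal
complement. For a vector `v`, `⟪∫ ψ ξ • ξ ∂μ, v⟫ = ∫ ψ ξ * ⟪ξ, v⟫ ∂μ`. If `v` is orthogonal to
the support, this vanishes because the support is conull. Conversely, if it vanishes for every
continuous `ψ`, then taking `ψ = ⟪·, v⟫` gives `∫ ⟪ξ, v⟫² ∂μ = 0`, so the continuous function
`⟪·, v⟫` vanishes `μ`-a.e., hence on the support.
-/

open MeasureTheory Submodule
open scoped InnerProductSpace

section Orthogonal

variable {𝕜 E : Type*} [RCLike 𝕜] [NormedAddCommGroup E] [InnerProductSpace 𝕜 E]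

theorem Submodule.mem_orthogonal_span_iff {s : Set E} {v : E} :
    v ∈ (span 𝕜 s)ᗮ ↔ ∀ u ∈ s, ⟪u, v⟫_𝕜 = 0 := by
  rw [← span_singleton_le_iff_mem, ← isOrtho_iff_le, isOrtho_comm, isOrtho_span]
  simp

theorem Submodule.span_eq_span_of_forall_inner_eq_zero_iff [FiniteDimensional 𝕜 E]
    {s t : Set E} (h : ∀ v : E, (∀ u ∈ s, ⟪u, v⟫_𝕜 = 0) ↔ ∀ u ∈ t, ⟪u, v⟫_𝕜 = 0) :
    span 𝕜 s = span 𝕜 t := by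
  rw [← orthogonal_orthogonal (span 𝕜 s), ← orthogonal_orthogonal (span 𝕜 t)]
  congr 1
  ext v
  simp only [mem_orthogonal_span_iff, h]

end Orthogonal

theorem MeasureTheory.Measure.eqOn_support_of_ae_eq {X Y : Type*} [TopologicalSpace X]
    [MeasurableSpace X] [TopologicalSpace Y] [T2Space Y] {μ : Measure X} {f g : X → Y}
    (hf : Continuous f) (hg : Continuous g) (h : f =ᵐ[μ] g) : Set.EqOn f g μ.support :=
  fun _ hx => by_contra fun hne =>
    Measure.subset_compl_support_of_isOpen (isClosed_eq hf hg).isOpen_compl (ae_iff.mp h) hne hx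

section Moments

variable {X E : Type*} [TopologicalSpace X] [CompactSpace X] [MeasurableSpace X]
  [OpensMeasurableSpace X] {μ : Measure X} [IsFiniteMeasure μ]
  [NormedAddCommGroup E] [InnerProductSpace ℝ E]

theorem ContinuousMap.integrable_of_compactSpace {F : Type*} [NormedAddCommGroup F]
    (f : C(X, F)) : Integrable f μ :=
  f.continuous.integrable_of_hasCompactSupport (HasCompactSupport.of_compactSpace f)

theorem inner_integral_smul_eq_integral_mul_inner [CompleteSpace E] (ψ : C(X, ℝ)) (f : C(X, E)) (v : E) :
    ⟪∫ x, ψ x • f x ∂μ, v⟫_ℝ = ∫ x, ψ x * ⟪f x, v⟫_ℝ ∂μ := by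
  have hint : Integrable (fun x => ψ x • f x) μ := (ψ • f).integrable_of_compactSpace
  rw [real_inner_comm, ← integral_inner hint]
  simp only [real_inner_comm v, inner_smul_right]

theorem forall_inner_integral_smul_eq_zero_iff [CompleteSpace E] [HereditarilyLindelofSpace X]
    (f : C(X, E)) (v : E) :
    (∀ ψ : C(X, ℝ), ⟪∫ x, ψ x • f x ∂μ, v⟫_ℝ = 0) ↔ ∀ x ∈ μ.support, ⟪f x, v⟫_ℝ = 0 := by
  simp only [inner_integral_smul_eq_integral_mul_inner]
  constructor
  · intro h
    let g : C(X, ℝ) := ⟨fun x => ⟪f x, v⟫_ℝ, by fun_prop⟩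
    have hg_sq : (fun x => g x * g x) =ᵐ[μ] 0 :=
      (integral_eq_zero_iff_of_nonneg (fun x => mul_self_nonneg (g x))
        (g * g).integrable_of_compactSpace).mp (h g)
    have hg : g =ᵐ[μ] 0 := hg_sq.mono fun x hx => mul_self_eq_zero.mp hx
    exact Measure.eqOn_support_of_ae_eq g.continuous continuous_const hg
  · intro h ψ
    have hzero : (fun x => ψ x * ⟪f x, v⟫_ℝ) =ᵐ[μ] 0 := by
      filter_upwards [Measure.support_mem_ae] with x hx
      simp [h x hx]
    exact integral_eq_zero_of_ae hzero

theorem span_range_integral_smul_eq_span_image_support [HereditarilyLindelofSpace X]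
    [FiniteDimensional ℝ E] (f : C(X, E)) :
    span ℝ (Set.range fun ψ : C(X, ℝ) => ∫ x, ψ x • f x ∂μ) = span ℝ (f '' μ.support) := by
  have : CompleteSpace E := FiniteDimensional.complete ℝ E
  refine span_eq_span_of_forall_inner_eq_zero_iff fun v => ?_
  simpa only [Set.forall_mem_range, Set.forall_mem_image] using
    forall_inner_integral_smul_eq_zero_iff f v

end Moments

theorem span_moment_vectors_eq_span_support_general
    (n : ℕ)
    (μ : Measure (Metric.sphere (0 : EuclideanSpace ℝ (Fin n)) 1)) [IsFiniteMeasure μ] :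
    Submodule.span ℝ
        {v : EuclideanSpace ℝ (Fin n) |
          ∃ ψ : C(Metric.sphere (0 : EuclideanSpace ℝ (Fin n)) 1, ℝ),
            v = ∫ ξ, ψ ξ • (ξ : EuclideanSpace ℝ (Fin n)) ∂μ} =
      Submodule.span ℝ
        ((fun ξ : Metric.sphere (0 : EuclideanSpace ℝ (Fin n)) 1 =>
            (ξ : EuclideanSpace ℝ (Fin n))) ''
          {ξ : Metric.sphere (0 : EuclideanSpace ℝ (Fin n)) 1 |
            ∀ U : Set (Metric.sphere (0 : EuclideanSpace ℝ (Fin n)) 1),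
              IsOpen U → ξ ∈ U → 0 < μ U}) := by
  have hsupport : {ξ : Metric.sphere (0 : EuclideanSpace ℝ (Fin n)) 1 |
      ∀ U, IsOpen U → ξ ∈ U → 0 < μ U} = μ.support := by
    simp only [Measure.support_eq_forall_isOpen, imp.swap]
  have hmoments : {v : EuclideanSpace ℝ (Fin n) |
      ∃ ψ : C(Metric.sphere (0 : EuclideanSpace ℝ (Fin n)) 1, ℝ),
        v = ∫ ξ, ψ ξ • (ξ : EuclideanSpace ℝ (Fin n)) ∂μ} =
      Set.range fun ψ : C(Metric.sphere (0 : EuclideanSpace ℝ (Fin n)) 1, ℝ) =>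
        ∫ ξ, ψ ξ • (ξ : EuclideanSpace ℝ (Fin n)) ∂μ := by
    simp only [Set.range, eq_comm]
  rw [hsupport, hmoments]
  exact span_range_integral_smul_eq_span_image_support ⟨Subtype.val, continuous_subtype_val⟩

/-- For a finite nonnegative Borel measure `μ` on the unit sphere
`S ⊆ ℝⁿ`, the linear span of the vectors `∫_S ξ ψ(ξ) dμ(ξ)`, `ψ ∈ C(S, ℝ)`,
coincides with the linear span of the support of `μ`. -/
theorem span_moment_vectors_eq_span_support
    (n : ℕ) (hn : 1 ≤ n)
    (μ : Measure (Metric.sphere (0 : EuclideanSpace ℝ (Fin n)) 1)) [IsFiniteMeasure μ] :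
    Submodule.span ℝ
        {v : EuclideanSpace ℝ (Fin n) |
          ∃ ψ : C(Metric.sphere (0 : EuclideanSpace ℝ (Fin n)) 1, ℝ),
            v = ∫ ξ, ψ ξ • (ξ : EuclideanSpace ℝ (Fin n)) ∂μ} =
      Submodule.span ℝ
        ((fun ξ : Metric.sphere (0 : EuclideanSpace ℝ (Fin n)) 1 =>
            (ξ : EuclideanSpace ℝ (Fin n))) ''
          {ξ : Metric.sphere (0 : EuclideanSpace ℝ (Fin n)) 1 |
            ∀ U : Set (Metric.sphere (0 : EuclideanSpace ℝ (Fin n)) 1),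
              IsOpen U → ξ ∈ U → 0 < μ U}) :=
  span_moment_vectors_eq_span_support_general n μ
end

section
/- Let n ≥ 1, let φ : ℝ → ℝⁿ be continuous, and let ξ ∈ ℝⁿ, α, β, I ∈ ℝ, δ > 0 be such that ξ·φ(λ) = αλ + β for all λ ∈ [I − δ, I + δ]. Define u(t, x) = I + δ sin(2π(ξ·x − α t)) for (t, x) ∈ Π = (0, ∞) × ℝⁿ. Then u is an entropy solution of u_t + div_x φ(u) = 0 on Π: for every k ∈ ℝ and every nonnegative C¹ function f with compact support contained in Π, ∫_Π ( |u − k| ∂_t f + sgn(u − k) (φ(u) − φ(k))·∇_x f ) dt dx ≥ 0. -/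
/-!
Write `u = g ∘ ℓ` with `ℓ (t, x) = ξ·x − α t` and `g s = I + δ sin (2π s)`. The Kružkov flux
`(|u − k|, sgn(u − k) (φ(u) − φ(k)))` is `sgn(u − k) • (Ψ u − Ψ k)` with `Ψ λ = (λ, φ λ)`, and
`ℓ ∘ Ψ ≡ β` on the range of `u`, so `ℓ` is constant on the flux.
A bounded measurable field `z ↦ W (ℓ z)` with `ℓ ∘ W` constant is divergence free: its part
along a fixed `v₀` with `ℓ v₀ = 1` is constant, and its part in `ker ℓ` is invariant under
translations by `ker ℓ`, so integration by parts along each direction of `ker ℓ` kills it.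
Hence the entropy integral vanishes.
-/

open MeasureTheory

/-- A bounded measurable `u` on `Π = (0,∞) × ℝⁿ` is an entropy solution of
`u_t + div_x φ(u) = 0` if for every `k ∈ ℝ` and every nonnegative `C¹` function `f`
compactly supported in `Π`,
`∫_Π (|u−k| ∂_t f + sgn(u−k) (φ(u)−φ(k))·∇_x f) ≥ 0`.
Here `∂_t f (z) = Df(z)(1,0)` and `(φ(u)−φ(k))·∇_x f (z) = Df(z)(0, φ(u(z))−φ(k))`. -/
def IsEntropySolution (n : ℕ) (φ : ℝ → Fin n → ℝ) (u : ℝ × (Fin n → ℝ) → ℝ) : Prop :=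
  ∀ k : ℝ, ∀ f : ℝ × (Fin n → ℝ) → ℝ, ContDiff ℝ 1 f → HasCompactSupport f →
    tsupport f ⊆ Set.Ioi (0 : ℝ) ×ˢ Set.univ → (∀ z, 0 ≤ f z) →
    0 ≤ ∫ z in Set.Ioi (0 : ℝ) ×ˢ (Set.univ : Set (Fin n → ℝ)),
        (|u z - k| * fderiv ℝ f z (1, 0) +
          Real.sign (u z - k) * fderiv ℝ f z (0, fun i => φ (u z) i - φ k i))

namespace Real

theorem measurable_sign : Measurable Real.sign :=
  Measurable.ite measurableSet_Iio measurable_const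
    (Measurable.ite measurableSet_Ioi measurable_const measurable_const)

theorem abs_sign_le_one (x : ℝ) : |Real.sign x| ≤ 1 := by
  rcases Real.sign_apply_eq x with h | h | h <;> simp [h]

theorem sign_mul_self (x : ℝ) : Real.sign x * x = |x| := by
  rcases lt_trichotomy x 0 with h | rfl | h
  · rw [Real.sign_of_neg h, abs_of_neg h, neg_one_mul]
  · simp
  · rw [Real.sign_of_pos h, abs_of_pos h, one_mul]

end Real

instance (n : ℕ) : (volume : Measure (ℝ × (Fin n → ℝ))).IsAddHaarMeasure :=
  Measure.prod.instIsAddHaarMeasure _ _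

section

variable {E : Type*} [NormedAddCommGroup E] [NormedSpace ℝ E] [MeasurableSpace E]
  {μ : Measure E} {f : E → ℝ}

theorem integrable_mul_fderiv_apply [OpensMeasurableSpace E] [IsFiniteMeasureOnCompacts μ]
    {a : E → ℝ} {C : ℝ} (ha : AEStronglyMeasurable a μ)
    (haC : ∀ z, |a z| ≤ C) (hf : ContDiff ℝ 1 f) (hfc : HasCompactSupport f) (v : E) :
    Integrable (fun z => a z * fderiv ℝ f z v) μ :=
  (((hf.continuous_fderiv one_ne_zero).clm_apply continuous_const).integrable_of_hasCompactSupport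
    (hfc.fderiv_apply ℝ v)).bdd_mul ha (ae_of_all _ haC)

theorem integrable_fderiv_apply [OpensMeasurableSpace E] [SecondCountableTopology E]
    [IsFiniteMeasureOnCompacts μ] {V : E → E} {C : ℝ} (hV : AEStronglyMeasurable V μ)
    (hVC : ∀ z, ‖V z‖ ≤ C) (hf : ContDiff ℝ 1 f) (hfc : HasCompactSupport f) :
    Integrable (fun z => fderiv ℝ f z (V z)) μ := by
  have hDf := hf.continuous_fderiv one_ne_zero
  refine Integrable.mono'
    ((hDf.norm.integrable_of_hasCompactSupport (hfc.fderiv ℝ).norm).mul_const C)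
    (isBoundedBilinearMap_apply.continuous.comp_aestronglyMeasurable
      (hDf.aestronglyMeasurable.prodMk hV)) (ae_of_all _ fun z => ?_)
  exact ((fderiv ℝ f z).le_opNorm _).trans (by gcongr; exact hVC z)

variable [FiniteDimensional ℝ E] [BorelSpace E] [μ.IsAddHaarMeasure]

/-- Integration by parts against `a`, whose derivative along `v` vanishes in the classical sense
even though `a` is only measurable. -/
theorem integral_mul_fderiv_eq_zero_of_forall_add_smul_eq {a : E → ℝ} {v : E} {C : ℝ}
    (ha : AEStronglyMeasurable a μ) (haC : ∀ z, |a z| ≤ C)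
    (hav : ∀ z (t : ℝ), a (z + t • v) = a z) (hf : ContDiff ℝ 1 f) (hfc : HasCompactSupport f) :
    ∫ z, a z * fderiv ℝ f z v ∂μ = 0 := by
  have hparts := integral_bilinear_hasLineDerivAt_right_eq_neg_left_of_integrable
    (B := ContinuousLinearMap.mul ℝ ℝ) (f' := 0) (μ := μ) (v := v)
    (by simp) (integrable_mul_fderiv_apply ha haC hf hfc v)
    ((hf.continuous.integrable_of_hasCompactSupport hfc).bdd_mul ha (ae_of_all _ haC))
    (fun z _ => by simpa [HasLineDerivAt, hav] using hasDerivAt_const (0 : ℝ) (a z))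
    (fun z _ => ((hf.differentiable one_ne_zero) z).hasFDerivAt.hasLineDerivAt v)
  simpa using hparts

theorem integral_fderiv_apply_comp_eq_zero_of_apply_eq_zero {ℓ : E →L[ℝ] ℝ} {W : ℝ → E} {C : ℝ}
    (hW : Measurable W) (hWC : ∀ s, ‖W s‖ ≤ C) (hℓW : ∀ s, ℓ (W s) = 0)
    (hf : ContDiff ℝ 1 f) (hfc : HasCompactSupport f) :
    ∫ z, fderiv ℝ f z (W (ℓ z)) ∂μ = 0 := by
  let K := LinearMap.ker (ℓ : E →ₗ[ℝ] ℝ)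
  let b := Module.finBasis ℝ K
  let w : ℝ → K := fun s => ⟨W s, hℓW s⟩
  let e : K →L[ℝ] (Fin (Module.finrank ℝ K) → ℝ) := b.equivFunL
  let a : Fin (Module.finrank ℝ K) → ℝ → ℝ := fun j s => e (w s) j
  have hWa : ∀ s, W s = ∑ j, a j s • (b j : E) := fun s =>
    (congrArg Subtype.val (b.sum_equivFun (w s))).symm.trans
      (by simp only [Submodule.coe_sum, Submodule.coe_smul]; rfl)
  have ha : ∀ j, Measurable (a j) := fun j =>
    ((continuous_apply j).comp e.continuous).measurable.comp hW.subtype_mk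
  have haC : ∀ j s, |a j s| ≤ ‖e‖ * C := fun j s =>
    calc |a j s| ≤ ‖e (w s)‖ := norm_le_pi_norm (e (w s)) j
      _ ≤ ‖e‖ * ‖W s‖ := e.le_opNorm (w s)
      _ ≤ ‖e‖ * C := by gcongr; exact hWC s
  have hint : ∀ j, Integrable (fun z => a j (ℓ z) * fderiv ℝ f z (b j)) μ := fun j =>
    integrable_mul_fderiv_apply ((ha j).comp ℓ.measurable).aestronglyMeasurable
      (fun z => haC j (ℓ z)) hf hfc _
  calc ∫ z, fderiv ℝ f z (W (ℓ z)) ∂μ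
      = ∫ z, ∑ j, a j (ℓ z) * fderiv ℝ f z (b j) ∂μ := by simp [hWa, map_sum]
    _ = ∑ j, ∫ z, a j (ℓ z) * fderiv ℝ f z (b j) ∂μ := integral_finsetSum _ fun j _ => hint j
    _ = 0 := Finset.sum_eq_zero fun j _ =>
      integral_mul_fderiv_eq_zero_of_forall_add_smul_eq
        ((ha j).comp ℓ.measurable).aestronglyMeasurable (fun z => haC j (ℓ z))
        (fun z t => by simp) hf hfc

theorem integral_fderiv_apply_comp_eq_zero {ℓ : E →L[ℝ] ℝ} {W : ℝ → E} {c C : ℝ}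
    (hW : Measurable W) (hWC : ∀ s, ‖W s‖ ≤ C) (hℓW : ∀ s, ℓ (W s) = c)
    (hf : ContDiff ℝ 1 f) (hfc : HasCompactSupport f) :
    ∫ z, fderiv ℝ f z (W (ℓ z)) ∂μ = 0 := by
  rcases eq_or_ne c 0 with rfl | hc
  · exact integral_fderiv_apply_comp_eq_zero_of_apply_eq_zero hW hWC hℓW hf hfc
  set v₀ := c⁻¹ • W 0
  have hv₀ : ℓ v₀ = 1 := by simp [v₀, hℓW, hc]
  set W' : ℝ → E := fun s => W s - c • v₀
  have hW' : Measurable W' := hW.sub_const _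
  have hW'C : ∀ s, ‖W' s‖ ≤ C + ‖c • v₀‖ := fun s =>
    (norm_sub_le _ _).trans (by gcongr; exact hWC s)
  have hsplit : ∀ z, fderiv ℝ f z (W (ℓ z)) = fderiv ℝ f z (W' (ℓ z)) + c * fderiv ℝ f z v₀ :=
    fun z => by simp [W']
  have hker : ∫ z, fderiv ℝ f z (W' (ℓ z)) ∂μ = 0 :=
    integral_fderiv_apply_comp_eq_zero_of_apply_eq_zero hW' hW'C (fun s => by simp [W', hℓW, hv₀])
      hf hfc
  have hconst : ∫ z, c * fderiv ℝ f z v₀ ∂μ = 0 :=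
    integral_mul_fderiv_eq_zero_of_forall_add_smul_eq (a := fun _ => c) (C := |c|)
      aestronglyMeasurable_const (fun _ => le_rfl) (fun _ _ => rfl) hf hfc
  rw [integral_congr_ae (ae_of_all _ hsplit),
    integral_add (integrable_fderiv_apply (V := fun z => W' (ℓ z))
      (hW'.comp ℓ.measurable).aestronglyMeasurable (fun z => hW'C (ℓ z)) hf hfc)
    (integrable_mul_fderiv_apply aestronglyMeasurable_const (fun _ => le_rfl) hf hfc _),
    hker, hconst, add_zero]

end

theorem abs_mul_add_sign_mul_eq_sign_smul {F : Type*} [NormedAddCommGroup F] [NormedSpace ℝ F]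
    (D : ℝ × F →L[ℝ] ℝ) (x : ℝ) (p : F) :
    |x| * D (1, 0) + Real.sign x * D (0, p) = D (Real.sign x • (x, p)) := by
  have hsplit : ((x, p) : ℝ × F) = x • (1, 0) + (0, p) := by simp
  rw [hsplit, smul_add, map_add, map_smul, map_smul, map_smul, smul_eq_mul, smul_eq_mul,
    smul_eq_mul, ← mul_assoc, Real.sign_mul_self]

/-- For `Ψ λ = (λ, φ λ)` this is the Kružkov entropy flux `(|λ - k|, sgn(λ - k) (φ λ - φ k))`. -/
noncomputable def kruzkovFlux {E : Type*} [AddCommGroup E] [Module ℝ E] (Ψ : ℝ → E) (k l : ℝ) :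
    E :=
  Real.sign (l - k) • (Ψ l - Ψ k)

section

variable {E : Type*} [NormedAddCommGroup E] [NormedSpace ℝ E] {Ψ : ℝ → E}

theorem measurable_kruzkovFlux [MeasurableSpace E] [BorelSpace E] [SecondCountableTopology E]
    (hΨ : Continuous Ψ) (k : ℝ) : Measurable (kruzkovFlux Ψ k) :=
  (Real.measurable_sign.comp (measurable_id.sub_const k)).smul
    (hΨ.sub continuous_const).measurable

theorem exists_norm_kruzkovFlux_le (hΨ : Continuous Ψ) (k a b : ℝ) :
    ∃ C, ∀ l ∈ Set.Icc a b, ‖kruzkovFlux Ψ k l‖ ≤ C := by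
  obtain ⟨C, hC⟩ := isCompact_Icc.exists_bound_of_continuousOn
    (hΨ.sub continuous_const).continuousOn (s := Set.Icc a b)
  refine ⟨C, fun l hl => ?_⟩
  rw [kruzkovFlux, norm_smul, Real.norm_eq_abs]
  exact (mul_le_of_le_one_left (norm_nonneg _) (Real.abs_sign_le_one _)).trans (hC l hl)

/-- The constant is `0` when `k ∈ [a, b]`; otherwise `sgn (l - k)` does not change on `[a, b]`. -/
theorem exists_apply_kruzkovFlux_eq (ℓ : E →L[ℝ] ℝ) {a b β : ℝ} (k : ℝ)
    (hℓΨ : ∀ l ∈ Set.Icc a b, ℓ (Ψ l) = β) :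
    ∃ c, ∀ l ∈ Set.Icc a b, ℓ (kruzkovFlux Ψ k l) = c := by
  simp only [kruzkovFlux, map_smul, map_sub, smul_eq_mul]
  by_cases hk : k ∈ Set.Icc a b
  · exact ⟨0, fun l hl => by rw [hℓΨ l hl, hℓΨ k hk, sub_self, mul_zero]⟩
  rcases not_and_or.mp hk with hk | hk <;> push Not at hk
  · exact ⟨β - ℓ (Ψ k), fun l hl => by
      rw [hℓΨ l hl, Real.sign_of_pos (by linarith [hl.1]), one_mul]⟩
  · exact ⟨-(β - ℓ (Ψ k)), fun l hl => by
      rw [hℓΨ l hl, Real.sign_of_neg (by linarith [hl.2]), neg_one_mul]⟩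

end

def travellingPhase (n : ℕ) (ξ : Fin n → ℝ) (α : ℝ) : ℝ × (Fin n → ℝ) →L[ℝ] ℝ :=
  (∑ i, ξ i • ContinuousLinearMap.proj i).comp (ContinuousLinearMap.snd ℝ ℝ _) -
    α • ContinuousLinearMap.fst ℝ ℝ _

@[simp]
theorem travellingPhase_apply (n : ℕ) (ξ : Fin n → ℝ) (α : ℝ) (z : ℝ × (Fin n → ℝ)) :
    travellingPhase n ξ α z = ∑ i, ξ i * z.2 i - α * z.1 := by
  simp [travellingPhase]

theorem travelling_wave_is_entropy_solution_general
    (n : ℕ) (φ : ℝ → Fin n → ℝ) (hφ : Continuous φ)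
    (ξ : Fin n → ℝ) (α β I δ : ℝ) (hδ : 0 < δ)
    (haff : ∀ l ∈ Set.Icc (I - δ) (I + δ), ∑ i, ξ i * φ l i = α * l + β)
    (u : ℝ × (Fin n → ℝ) → ℝ)
    (hu : u = fun z => I + δ * Real.sin (2 * Real.pi * ((∑ i, ξ i * z.2 i) - α * z.1))) :
    IsEntropySolution n φ u := by
  intro k f hf hfc hsupp _
  set ℓ := travellingPhase n ξ α
  set g : ℝ → ℝ := fun s => I + δ * Real.sin (2 * Real.pi * s)
  set Ψ : ℝ → ℝ × (Fin n → ℝ) := fun l => (l, φ l)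
  have hg : ∀ s, g s ∈ Set.Icc (I - δ) (I + δ) := fun s => by
    constructor <;>
      nlinarith [Real.neg_one_le_sin (2 * Real.pi * s), Real.sin_le_one (2 * Real.pi * s)]
  have hΨ : Continuous Ψ := continuous_id.prodMk hφ
  obtain ⟨c, hc⟩ := exists_apply_kruzkovFlux_eq (Ψ := Ψ) ℓ (a := I - δ) (b := I + δ) (β := β) k
    fun l hl => by simp [ℓ, Ψ, haff l hl]
  obtain ⟨C, hC⟩ := exists_norm_kruzkovFlux_le hΨ k (I - δ) (I + δ)
  have hintegrand : ∀ z, |u z - k| * fderiv ℝ f z (1, 0) +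
      Real.sign (u z - k) * fderiv ℝ f z (0, fun i => φ (u z) i - φ k i)
        = fderiv ℝ f z (kruzkovFlux Ψ k (g (ℓ z))) := fun z => by
    rw [show u z = g (ℓ z) by simp [hu, g, ℓ]]
    exact abs_mul_add_sign_mul_eq_sign_smul (fderiv ℝ f z) (g (ℓ z) - k) (φ (g (ℓ z)) - φ k)
  rw [setIntegral_eq_integral_of_forall_compl_eq_zero fun z hz => by
      rw [hintegrand, fderiv_of_notMem_tsupport ℝ fun h => hz (hsupp h), zero_apply],
    integral_congr_ae (ae_of_all _ hintegrand),
    integral_fderiv_apply_comp_eq_zero (W := fun s => kruzkovFlux Ψ k (g s))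
      ((measurable_kruzkovFlux hΨ k).comp (by fun_prop : Continuous g).measurable)
      (fun s => hC _ (hg s)) (fun s => hc _ (hg s)) hf hfc]

/-- If `ξ·φ(λ) = αλ + β` on `[I−δ, I+δ]`, then
`u(t,x) = I + δ sin(2π(ξ·x − αt))` is an entropy solution of `u_t + div_x φ(u) = 0`
on `Π = (0,∞) × ℝⁿ`. -/
theorem travelling_wave_is_entropy_solution
    (n : ℕ) (hn : 1 ≤ n) (φ : ℝ → Fin n → ℝ) (hφ : Continuous φ)
    (ξ : Fin n → ℝ) (α β I δ : ℝ) (hδ : 0 < δ)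
    (haff : ∀ l ∈ Set.Icc (I - δ) (I + δ), ∑ i, ξ i * φ l i = α * l + β)
    (u : ℝ × (Fin n → ℝ) → ℝ)
    (hu : u = fun z => I + δ * Real.sin (2 * Real.pi * ((∑ i, ξ i * z.2 i) - α * z.1))) :
    IsEntropySolution n φ u :=
  travelling_wave_is_entropy_solution_general n φ hφ ξ α β I δ hδ haff u hu
end

section
/- Let u₀ : ℝ → ℝ be a bounded measurable function. If u₀(x) ≥ 0 for almost every x, then u(t, x) = u₀(x − t) is an entropy solution of u_t + (|u|)_x = 0 on Π = (0, ∞) × ℝ: for every k ∈ ℝ and every nonnegative C¹ function f with compact support in Π, ∫_Π ( |u − k| ∂_t f + sgn(u − k) (|u| − |k|) ∂_x f ) dt dx ≥ 0. Likewise, if u₀(x) ≤ 0 for almost every x, then u(t, x) = u₀(x + t) is an entropy solution of u_t + (|u|)_x = 0 on Π in the same sense. -/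
open MeasureTheory

/-!
For `u ≥ 0` the entropy flux is affine in the entropy:
`sgn(u - k)(|u| - |k|) = |u - k| + 2 min(k, 0)`, and for `u ≤ 0` it is `-|u - k| + 2 max(k, 0)`.
The entropy integrand is therefore `|u - k| ∂_{(1, ±1)} f + C ∂_x f`. The second term integrates
to zero, and so does the first, because `|u - k|` is constant along the characteristic direction
`(1, ±1)`: integrating by parts along it moves the derivative onto `|u - k|`, where it vanishes.
Hence the entropy inequality holds with equality.
-/

/-- A bounded measurable `u` on `Π = (0,∞) × ℝ` is an entropy solution of
`u_t + (|u|)_x = 0` if for every `k ∈ ℝ` and every nonnegative `C¹` function `f`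
compactly supported in `Π`,
`∫_Π (|u−k| ∂_t f + sgn(u−k)(|u|−|k|) ∂_x f) dt dx ≥ 0`,
where `∂_t f (z) = Df(z)(1,0)` and `∂_x f (z) = Df(z)(0,1)`. -/
def IsEntropySolutionAbsFlux (u : ℝ × ℝ → ℝ) : Prop :=
  ∀ k : ℝ, ∀ f : ℝ × ℝ → ℝ, ContDiff ℝ 1 f → HasCompactSupport f →
    tsupport f ⊆ Set.Ioi (0 : ℝ) ×ˢ Set.univ → (∀ z, 0 ≤ f z) →
    0 ≤ ∫ z in Set.Ioi (0 : ℝ) ×ˢ (Set.univ : Set ℝ),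
        (|u z - k| * fderiv ℝ f z (1, 0) +
          Real.sign (u z - k) * (|u z| - |k|) * fderiv ℝ f z (0, 1))

section IntegrationByParts

variable {E : Type*} [NormedAddCommGroup E] [NormedSpace ℝ E]
  [MeasurableSpace E] [BorelSpace E] {μ : Measure E} [μ.IsAddHaarMeasure]
  {w f : E → ℝ} {M : ℝ}

theorem integrable_mul_fderiv_apply_s12 (hwm : AEStronglyMeasurable w μ) (hM : ∀ x, |w x| ≤ M)
    (hf : ContDiff ℝ 1 f) (hcs : HasCompactSupport f) (v : E) :
    Integrable (fun x => w x * fderiv ℝ f x v) μ :=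
  (((hf.continuous_fderiv one_ne_zero).clm_apply continuous_const).integrable_of_hasCompactSupport
    (hcs.fderiv_apply ℝ v)).bdd_mul hwm (ae_of_all _ hM)

theorem integral_mul_fderiv_eq_zero_of_lineInvariant [FiniteDimensional ℝ E] {v : E}
    (hw : ∀ x (t : ℝ), w (x + t • v) = w x) (hwm : AEStronglyMeasurable w μ)
    (hM : ∀ x, |w x| ≤ M) (hf : ContDiff ℝ 1 f) (hcs : HasCompactSupport f) :
    ∫ x, w x * fderiv ℝ f x v ∂μ = 0 := by
  have hw' (x : E) : HasLineDerivAt ℝ w 0 x v := by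
    simpa only [HasLineDerivAt, hw] using hasDerivAt_const (0 : ℝ) (w x)
  have hwf : Integrable (fun x => w x * f x) μ :=
    (hf.continuous.integrable_of_hasCompactSupport hcs).bdd_mul hwm (ae_of_all _ hM)
  simpa using integral_bilinear_hasLineDerivAt_right_eq_neg_left_of_integrable
    (B := ContinuousLinearMap.mul ℝ ℝ) (f' := 0) (g' := fun x => fderiv ℝ f x v)
    (by simp) (integrable_mul_fderiv_apply_s12 hwm hM hf hcs v) hwf
    (fun x _ => hw' x) (fun x _ => (hf.differentiable one_ne_zero x).hasFDerivAt.hasLineDerivAt v)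

theorem integral_fderiv_apply_eq_zero [FiniteDimensional ℝ E] (hf : ContDiff ℝ 1 f)
    (hcs : HasCompactSupport f) (v : E) :
    ∫ x, fderiv ℝ f x v ∂μ = 0 := by
  simpa using integral_mul_fderiv_eq_zero_of_lineInvariant (μ := μ) (w := 1) (M := 1)
    (fun _ _ => rfl) aestronglyMeasurable_const (by simp) hf hcs

end IntegrationByParts

theorem sign_sub_mul_abs_sub_abs_of_nonneg {u : ℝ} (hu : 0 ≤ u) (k : ℝ) :
    Real.sign (u - k) * (|u| - |k|) = |u - k| + 2 * min k 0 := by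
  rcases lt_trichotomy u k with h | rfl | h
  · rw [Real.sign_of_neg (by linarith), abs_of_neg (by linarith : u - k < 0), abs_of_nonneg hu,
      abs_of_pos (by linarith : 0 < k), min_eq_right (by linarith)]
    ring
  · simp [min_eq_right hu]
  · rw [Real.sign_of_pos (by linarith), abs_of_pos (by linarith : 0 < u - k), abs_of_nonneg hu]
    rcases le_total 0 k with hk | hk
    · rw [abs_of_nonneg hk, min_eq_right hk]; ring
    · rw [abs_of_nonpos hk, min_eq_left hk]; ring

theorem sign_sub_mul_abs_sub_abs_of_nonpos {u : ℝ} (hu : u ≤ 0) (k : ℝ) :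
    Real.sign (u - k) * (|u| - |k|) = -|u - k| + 2 * max k 0 := by
  have h := sign_sub_mul_abs_sub_abs_of_nonneg (neg_nonneg.2 hu) (-k)
  have hmin : min (-k) 0 = -max k 0 := by rw [← min_neg_neg, neg_zero]
  rw [neg_sub_neg, ← neg_sub, Real.sign_neg, abs_neg, abs_neg, abs_neg, hmin] at h
  linarith

theorem ae_comp_sub_mul_fst {P : ℝ → Prop} (h : ∀ᵐ x, P x) (c : ℝ) :
    ∀ᵐ z : ℝ × ℝ, P (z.2 - c * z.1) :=
  (QuasiMeasurePreserving.prod_of_right (by fun_prop) (ae_of_all _ fun t =>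
    (measurePreserving_sub_right volume (c * t)).quasiMeasurePreserving)).ae h

theorem isEntropySolutionAbsFlux_of_sign_identity {u₀ : ℝ → ℝ} (hmeas : Measurable u₀) {M : ℝ}
    (hbd : ∀ x, |u₀ x| ≤ M) (c : ℝ) (C : ℝ → ℝ)
    (hid : ∀ᵐ x, ∀ k, Real.sign (u₀ x - k) * (|u₀ x| - |k|) = c * |u₀ x - k| + C k) :
    IsEntropySolutionAbsFlux fun z => u₀ (z.2 - c * z.1) := by
  intro k f hf hcs hsupp _
  set w : ℝ × ℝ → ℝ := fun z => |u₀ (z.2 - c * z.1) - k|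
  have hwm : AEStronglyMeasurable w :=
    ((hmeas.comp (by fun_prop)).sub_const k).abs.aestronglyMeasurable
  have hwM (z : ℝ × ℝ) : |w z| ≤ M + |k| := by
    rw [abs_abs]
    exact (abs_sub _ _).trans (by linarith [hbd (z.2 - c * z.1)])
  have hw (z : ℝ × ℝ) (t : ℝ) : w (z + t • (1, c)) = w z := by
    simp only [w, Prod.fst_add, Prod.snd_add, Prod.smul_mk, smul_eq_mul, mul_one]
    ring_nf
  have hdir (z : ℝ × ℝ) :
      fderiv ℝ f z (1, c) = fderiv ℝ f z (1, 0) + c * fderiv ℝ f z (0, 1) := by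
    rw [← smul_eq_mul, ← map_smul, ← map_add, Prod.smul_mk, Prod.mk_add_mk]
    simp
  rw [setIntegral_eq_integral_of_forall_compl_eq_zero fun z hz => by
      simp [fderiv_of_notMem_tsupport ℝ fun h => hz (hsupp h)],
    integral_congr_ae (g := fun z => w z * fderiv ℝ f z (1, c) + C k * fderiv ℝ f z (0, 1)) ?_,
    integral_add (integrable_mul_fderiv_apply_s12 hwm hwM hf hcs _)
      (integrable_mul_fderiv_apply_s12 aestronglyMeasurable_const (M := |C k|) (fun _ => le_rfl)
        hf hcs _),
    integral_mul_fderiv_eq_zero_of_lineInvariant hw hwm hwM hf hcs, integral_const_mul,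
    integral_fderiv_apply_eq_zero hf hcs]
  · simp
  filter_upwards [ae_comp_sub_mul_fst hid c] with z hz
  rw [hz k, hdir]
  ring

/-- For a bounded measurable `u₀ : ℝ → ℝ`, if `u₀ ≥ 0` a.e. then
`u(t,x) = u₀(x − t)` is an entropy solution of `u_t + (|u|)_x = 0` on `(0,∞) × ℝ`;
likewise, if `u₀ ≤ 0` a.e. then `u(t,x) = u₀(x + t)` is an entropy solution. -/
theorem signed_translates_are_entropy_solutions
    (u₀ : ℝ → ℝ) (hmeas : Measurable u₀) (M : ℝ) (hbd : ∀ x, |u₀ x| ≤ M) :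
    ((∀ᵐ x : ℝ, 0 ≤ u₀ x) → IsEntropySolutionAbsFlux fun z => u₀ (z.2 - z.1)) ∧
    ((∀ᵐ x : ℝ, u₀ x ≤ 0) → IsEntropySolutionAbsFlux fun z => u₀ (z.2 + z.1)) := by
  constructor
  · intro hpos
    simpa using isEntropySolutionAbsFlux_of_sign_identity hmeas hbd 1 (fun k => 2 * min k 0)
      (hpos.mono fun x hx k => by rw [sign_sub_mul_abs_sub_abs_of_nonneg hx, one_mul])
  · intro hneg
    simpa using isEntropySolutionAbsFlux_of_sign_identity hmeas hbd (-1) (fun k => 2 * max k 0)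
      (hneg.mono fun x hx k => by rw [sign_sub_mul_abs_sub_abs_of_nonpos hx, neg_one_mul])
end
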